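/- arXiv:2210.15023 — 12 statements merged into one kernel-verified Lean document; each statement's English description precedes it below -/
import Mathlib

section
/- Let U : [0,∞) → ℝ be a monotone nonincreasing, differentiable solution of the stationary competitive master equation. If either α ≤ 0, or h(p/ε − c)⁺ ≥ α(r+δ), then U(0) ≥ α. -/
/-! If `U 0 < α`, then at `k = 0` both factors of the transport term `λ (U 0 - α) U'(0)` are
nonpositive, so the master equation gives `(r + δ) U 0 ≥ h (p/ε - c)⁺`. The right-hand side is
nonnegative, and in the second case at least `α (r + δ)`; either way `U 0 ≥ α`, a contradiction. -/

open Set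

theorem AntitoneOn.deriv_nonpos_of_Ici {f : ℝ → ℝ} {a : ℝ} (hf : AntitoneOn f (Ici a)) :
    deriv f a ≤ 0 := by
  by_cases hfa : DifferentiableAt ℝ f a
  · rw [← hfa.derivWithin (uniqueDiffWithinAt_Ici a)]
    exact hf.derivWithin_nonpos
  · rw [deriv_zero_of_not_differentiableAt hfa]

theorem masterSol_value_at_zero_ge_alpha_general
    (r δ lam h p ε c α : ℝ)
    (hr : 0 < r) (hδ : 0 < δ) (hlam : 0 < lam) (hh : 0 < h)
    (U : ℝ → ℝ)
    (hmono : AntitoneOn U (Set.Ici 0))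
    (heq : ∀ k : ℝ, 0 ≤ k →
      -(r + δ) * U k + (lam * (U k - α) - δ * k) * deriv U k
        + h * max (p / (k + ε) - c) 0 = 0)
    (hcase : α ≤ 0 ∨ α * (r + δ) ≤ h * max (p / ε - c) 0) :
    α ≤ U 0 := by
  have hderiv : deriv U 0 ≤ 0 := hmono.deriv_nonpos_of_Ici
  have heq₀ := heq 0 le_rfl
  simp only [zero_add, mul_zero, sub_zero] at heq₀
  by_contra! hlt
  have htransport : 0 ≤ lam * (U 0 - α) * deriv U 0 :=
    mul_nonneg_of_nonpos_of_nonpos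
      (mul_nonpos_of_nonneg_of_nonpos hlam.le (sub_nonpos.mpr hlt.le)) hderiv
  have hpayoff : h * max (p / ε - c) 0 ≤ (r + δ) * U 0 := by linarith
  have hpayoff_nonneg : 0 ≤ h * max (p / ε - c) 0 := mul_nonneg hh.le (le_max_right _ _)
  rcases hcase with hα | hα
  · nlinarith
  · nlinarith

/-- If `U` is a monotone nonincreasing differentiable solution of the stationary competitive
master equation on `[0,∞)`, and either `α ≤ 0` or `h(p/ε - c)⁺ ≥ α(r+δ)`,
then `U(0) ≥ α`. -/
theorem masterSol_value_at_zero_ge_alpha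
    (r δ lam h p ε c α : ℝ)
    (hr : 0 < r) (hδ : 0 < δ) (hlam : 0 < lam) (hh : 0 < h) (hp : 0 < p) (hε : 0 < ε)
    (U : ℝ → ℝ)
    (hmono : AntitoneOn U (Set.Ici 0))
    (hdiff : ∀ k : ℝ, 0 ≤ k → DifferentiableAt ℝ U k)
    (heq : ∀ k : ℝ, 0 ≤ k →
      -(r + δ) * U k + (lam * (U k - α) - δ * k) * deriv U k
        + h * max (p / (k + ε) - c) 0 = 0)
    (hcase : α ≤ 0 ∨ α * (r + δ) ≤ h * max (p / ε - c) 0) :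
    α ≤ U 0 :=
  masterSol_value_at_zero_ge_alpha_general r δ lam h p ε c α hr hδ hlam hh U hmono heq hcase
end

section
/- Assume α ≥ 0 and c̄ε < hp. Then the stationary system { λ(u − α) = δk , (r+δ)u = h(p/(k+ε) − c)⁺ } has exactly one solution (k*, u*) with k* ≥ 0, and k* equals the explicit value k*(c̄) = ( −δε − c̄λ/(r+δ) + √( (δε − c̄λ/(r+δ))² + 4δλhp/(r+δ) ) ) / (2δ), with u* = α + δk*/λ. -/
/-- The explicit equilibrium capacity `k*(c̄)` of the competitive model. -/
noncomputable def kstar (r δ lam h p ε cbar : ℝ) : ℝ :=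
  (-(δ * ε) - cbar * lam / (r + δ)
      + Real.sqrt ((δ * ε - cbar * lam / (r + δ)) ^ 2 + 4 * δ * lam * h * p / (r + δ)))
    / (2 * δ)

lemma quad_unique (a b c k K : ℝ) (ha : 0 < a) (hc : c < 0) (hk : 0 ≤ k) (hK : 0 ≤ K)
    (h1 : a * k ^ 2 + b * k + c = 0) (h2 : a * K ^ 2 + b * K + c = 0) : k = K := by
  have hfac : (k - K) * (a * (k + K) + b) = 0 := by linear_combination h1 - h2
  rcases mul_eq_zero.mp hfac with h | h
  · linarith [sub_eq_zero.mp h]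
  · exfalso
    have hkk : a * k * K = c := by linear_combination k * h - h1
    nlinarith [mul_nonneg (mul_nonneg ha.le hk) hK]


set_option maxHeartbeats 1600000 in
/-- Under `α ≥ 0` and `c̄ε < hp`, the stationary system
`{ λ(u - α) = δk , (r+δ)u = h(p/(k+ε) - c)⁺ }` has exactly one solution `(k*, u*)` with
`k* ≥ 0`, given by the explicit formula `k* = k*(c̄)` and `u* = α + δk*/λ`. -/
theorem stationary_state_competitive
    (r δ lam h p ε c α : ℝ)
    (hr : 0 < r) (hδ : 0 < δ) (hlam : 0 < lam) (hh : 0 < h) (hp : 0 < p) (hε : 0 < ε)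
    (hα : 0 ≤ α) (hc : (h * c + (r + δ) * α) * ε < h * p) :
    (0 ≤ kstar r δ lam h p ε (h * c + (r + δ) * α) ∧
      lam * ((α + δ * kstar r δ lam h p ε (h * c + (r + δ) * α) / lam) - α)
        = δ * kstar r δ lam h p ε (h * c + (r + δ) * α) ∧
      (r + δ) * (α + δ * kstar r δ lam h p ε (h * c + (r + δ) * α) / lam)
        = h * max (p / (kstar r δ lam h p ε (h * c + (r + δ) * α) + ε) - c) 0) ∧
    ∀ k u : ℝ, 0 ≤ k → lam * (u - α) = δ * k →
      (r + δ) * u = h * max (p / (k + ε) - c) 0 →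
      k = kstar r δ lam h p ε (h * c + (r + δ) * α) ∧
        u = α + δ * kstar r δ lam h p ε (h * c + (r + δ) * α) / lam := by
  have hrδ : 0 < r + δ := by linarith
  have hcb0 : h * c ≤ h * c + (r + δ) * α := by nlinarith
  obtain ⟨K, hKdef⟩ : ∃ x : ℝ, x = kstar r δ lam h p ε (h * c + (r + δ) * α) := ⟨_, rfl⟩
  rw [← hKdef]
  have hDpos : 0 < (δ * ε - (h * c + (r + δ) * α) * lam / (r + δ)) ^ 2
      + 4 * δ * lam * h * p / (r + δ) := by
    have h4 : 0 < 4 * δ * lam * h * p / (r + δ) := by positivity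
    nlinarith [sq_nonneg (δ * ε - (h * c + (r + δ) * α) * lam / (r + δ))]
  obtain ⟨S, hS⟩ : ∃ x : ℝ, x = Real.sqrt ((δ * ε - (h * c + (r + δ) * α) * lam / (r + δ)) ^ 2
      + 4 * δ * lam * h * p / (r + δ)) := ⟨_, rfl⟩
  have hS0 : 0 ≤ S := hS ▸ Real.sqrt_nonneg _
  have hS2 : S ^ 2 = (δ * ε - (h * c + (r + δ) * α) * lam / (r + δ)) ^ 2
      + 4 * δ * lam * h * p / (r + δ) := by rw [hS]; exact Real.sq_sqrt hDpos.le
  have hKval : K = (S - (δ * ε + (h * c + (r + δ) * α) * lam / (r + δ))) / (2 * δ) := by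
    rw [hKdef, kstar, hS]; ring
  have hCneg : ((h * c + (r + δ) * α) * ε - h * p) * lam / (r + δ) < 0 :=
    div_neg_of_neg_of_pos (mul_neg_of_neg_of_pos (by linarith) hlam) hrδ
  have hDB : S ^ 2 = (δ * ε + (h * c + (r + δ) * α) * lam / (r + δ)) ^ 2
      - 4 * δ * (((h * c + (r + δ) * α) * ε - h * p) * lam / (r + δ)) := by
    rw [hS2]; field_simp; ring
  have hBS : δ * ε + (h * c + (r + δ) * α) * lam / (r + δ) < S := by
    nlinarith [mul_pos hδ (neg_pos.mpr hCneg), hS0]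
  have hK0 : 0 ≤ K := by
    rw [hKval]; apply div_nonneg (by linarith) (by linarith)
  have hne : (r + δ) ≠ 0 := ne_of_gt hrδ
  have hDB' : (r + δ) ^ 2 * S ^ 2 = (δ * ε * (r + δ) + (h * c + (r + δ) * α) * lam) ^ 2
      - 4 * δ * (r + δ) * (((h * c + (r + δ) * α) * ε - h * p) * lam) := by
    rw [hS2]; field_simp; ring
  -- the quadratic satisfied by K
  have hquad : (r + δ) * δ * K ^ 2 + ((r + δ) * δ * ε + (h * c + (r + δ) * α) * lam) * K
      + ((h * c + (r + δ) * α) * ε - h * p) * lam = 0 := by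
    rw [hKval]
    field_simp
    linear_combination hDB'
  have hKε : 0 < K + ε := by linarith
  have hlne : lam ≠ 0 := ne_of_gt hlam
  have hKεne : K + ε ≠ 0 := ne_of_gt hKε
  have he : h * (p / (K + ε) - c) = (r + δ) * (α + δ * K / lam) := by
    field_simp
    linear_combination -hquad
  have hx0 : 0 ≤ p / (K + ε) - c := by
    have h1 : 0 ≤ α + δ * K / lam := add_nonneg hα (by positivity)
    have h2 : 0 ≤ h * (p / (K + ε) - c) := he ▸ mul_nonneg hrδ.le h1
    exact le_of_mul_le_mul_left (by linarith) hh
  refine ⟨⟨hK0, by field_simp; ring, ?_⟩, ?_⟩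
  · rw [max_eq_left hx0]
    linarith [he]
  · intro k u hk h1 h2
    have hu : u = α + δ * k / lam := by
      field_simp
      linarith [h1]
    rcases le_or_gt (p / (k + ε) - c) 0 with hle | hlt
    · exfalso
      rw [max_eq_right hle, mul_zero] at h2
      have hu0 : u = 0 := by
        rcases mul_eq_zero.mp h2 with h | h
        · exact absurd h hne
        · exact h
      have hd : 0 ≤ δ * k / lam := by positivity
      have hα0 : α = 0 := by rw [hu0] at hu; linarith
      have hk0 : k = 0 := by
        rw [hu0, hα0] at h1
        have h5 : δ * k = 0 := by linarith [h1]
        exact (mul_eq_zero.mp h5).resolve_left (ne_of_gt hδ)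
      rw [hk0, zero_add] at hle
      have hpc : p / ε ≤ c := by linarith
      rw [div_le_iff₀ hε] at hpc
      rw [hα0] at hc
      have h6 : h * p ≤ h * (c * ε) := mul_le_mul_of_nonneg_left hpc hh.le
      nlinarith [h6, hc]
    · rw [max_eq_left hlt.le, hu] at h2
      have hkεne : k + ε ≠ 0 := by positivity
      have hqk : (r + δ) * δ * k ^ 2 + ((r + δ) * δ * ε + (h * c + (r + δ) * α) * lam) * k
          + ((h * c + (r + δ) * α) * ε - h * p) * lam = 0 := by
        field_simp at h2
        linear_combination h2
      have hkey : k = K :=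
        quad_unique ((r + δ) * δ) ((r + δ) * δ * ε + (h * c + (r + δ) * α) * lam)
          (((h * c + (r + δ) * α) * ε - h * p) * lam) k K (mul_pos hrδ hδ)
          (mul_neg_of_neg_of_pos (by linarith) hlam) hk hK0 hqk hquad
      exact ⟨hkey, by rw [hu, hkey]⟩
end

section
/- The function c̄ ↦ k*(c̄) = ( −δε − c̄λ/(r+δ) + √( (δε − c̄λ/(r+δ))² + 4δλhp/(r+δ) ) ) / (2δ) is strictly decreasing on ℝ. -/
/-!
With `t = δε - c̄λ/(r+δ)` and `B = 4δλhp/(r+δ) > 0` one has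
`2δ k*(c̄) = t + √(t² + B) - 2δε`. The map `c̄ ↦ t` is strictly decreasing, and
`t ↦ t + √(t² + B)` is strictly increasing because `√(t² + B) > |t|`: for `s < t`,
`(t + √(t²+B) - s - √(s²+B)) (√(s²+B) + √(t²+B)) = (t - s) (s + t + √(s²+B) + √(t²+B)) > 0`.
-/

lemma abs_lt_sqrt_sq_add {B : ℝ} (hB : 0 < B) (t : ℝ) : |t| < √(t ^ 2 + B) :=
  (Real.lt_sqrt (abs_nonneg t)).mpr (by rw [sq_abs]; linarith)

lemma strictMono_add_sqrt_sq_add {B : ℝ} (hB : 0 < B) :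
    StrictMono fun t : ℝ => t + √(t ^ 2 + B) := by
  intro s t hst
  have hs := abs_lt_sqrt_sq_add hB s
  have ht := abs_lt_sqrt_sq_add hB t
  have hsum_pos : 0 < s + t + √(s ^ 2 + B) + √(t ^ 2 + B) := by
    linarith [neg_abs_le s, neg_abs_le t]
  have hsq_sub : √(t ^ 2 + B) ^ 2 - √(s ^ 2 + B) ^ 2 = t ^ 2 - s ^ 2 := by
    rw [Real.sq_sqrt (by positivity), Real.sq_sqrt (by positivity)]; ring
  have hden : 0 < √(s ^ 2 + B) + √(t ^ 2 + B) := by linarith [abs_nonneg s, abs_nonneg t]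
  have hprod : 0 < (t + √(t ^ 2 + B) - (s + √(s ^ 2 + B))) * (√(s ^ 2 + B) + √(t ^ 2 + B)) := by
    nlinarith [mul_pos (sub_pos.mpr hst) hsum_pos]
  exact sub_pos.mp (pos_of_mul_pos_left hprod hden.le)

theorem kstar_strictAnti_general
    (r δ lam h p ε : ℝ)
    (hr : 0 < r) (hδ : 0 < δ) (hlam : 0 < lam) (hh : 0 < h) (hp : 0 < p) :
    StrictAnti (fun cbar : ℝ => kstar r δ lam h p ε cbar) := by
  intro c₁ c₂ hc
  have hrδ : 0 < r + δ := by linarith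
  have ht : δ * ε - c₂ * lam / (r + δ) < δ * ε - c₁ * lam / (r + δ) := by
    gcongr
  have key := strictMono_add_sqrt_sq_add (by positivity : 0 < 4 * δ * lam * h * p / (r + δ)) ht
  simp only at key
  simp only [kstar]
  gcongr ?_ / _
  linarith

/-- The equilibrium capacity `c̄ ↦ k*(c̄)` is strictly decreasing on `ℝ`. -/
theorem kstar_strictAnti
    (r δ lam h p ε : ℝ)
    (hr : 0 < r) (hδ : 0 < δ) (hlam : 0 < lam) (hh : 0 < h) (hp : 0 < p) (hε : 0 < ε) :
    StrictAnti (fun cbar : ℝ => kstar r δ lam h p ε cbar) :=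
  kstar_strictAnti_general r δ lam h p ε hr hδ hlam hh hp
end

section
/- If 0 < c̄ and c̄ε < hp, then k*(c̄) < hp/c̄ − ε, where k*(c̄) = ( −δε − c̄λ/(r+δ) + √( (δε − c̄λ/(r+δ))² + 4δλhp/(r+δ) ) ) / (2δ). -/
/-- If `0 < c̄` and `c̄ε < hp`, then `k*(c̄) < hp/c̄ - ε`. -/
theorem kstar_lt
    (r δ lam h p ε cbar : ℝ)
    (hr : 0 < r) (hδ : 0 < δ) (hlam : 0 < lam) (hh : 0 < h) (hp : 0 < p) (hε : 0 < ε)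
    (hcbar : 0 < cbar) (hce : cbar * ε < h * p) :
    kstar r δ lam h p ε cbar < h * p / cbar - ε := by
  have hrδ : 0 < r + δ := by linarith
  set B := cbar * lam / (r + δ) with hB
  have hBpos : 0 < B := by positivity
  set q := h * p / cbar with hqdef
  have hq : ε < q := (lt_div_iff₀ hcbar).mpr (by linarith)
  have hqpos : 0 < q := lt_trans hε hq
  rw [kstar, div_lt_iff₀ (by positivity)]
  have key : Real.sqrt ((δ * ε - B) ^ 2 + 4 * δ * lam * h * p / (r + δ))
      < 2 * δ * q - δ * ε + B := by
    rw [Real.sqrt_lt' (by nlinarith)]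
    have h4 : 4 * δ * lam * h * p / (r + δ) = 4 * δ * q * B := by
      rw [hB, hqdef]; field_simp
    rw [h4]
    nlinarith [mul_pos (mul_pos (mul_pos hδ hδ) hqpos) (sub_pos.mpr hq)]
  nlinarith [key]
end

section
/- Assume α ≥ 0 and c̄ε < hp, and let k* = k*(c̄) = ( −δε − c̄λ/(r+δ) + √( (δε − c̄λ/(r+δ))² + 4δλhp/(r+δ) ) ) / (2δ). Then k* > 0 and p/(k* + ε) > c, so that the positive part in the stationary relation (r+δ)u* = h(p/(k*+ε) − c)⁺ is not active (i.e. p/(k*+ε) − c is strictly positive). -/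
theorem quadratic_larger_root_eq_zero {a b c : ℝ} (ha : a ≠ 0) (hd : 0 ≤ discrim a b c) :
    let x := (-b + √(discrim a b c)) / (2 * a)
    a * (x * x) + b * x + c = 0 :=
  (quadratic_eq_zero_iff ha (Real.mul_self_sqrt hd).symm _).mpr (Or.inl rfl)

theorem discrim_pos_of_neg_const {a b c : ℝ} (ha : 0 < a) (hc : c < 0) : 0 < discrim a b c := by
  rw [discrim]
  nlinarith [sq_nonneg b]

theorem quadratic_larger_root_pos {a b c : ℝ} (ha : 0 < a) (hc : c < 0) :
    0 < (-b + √(discrim a b c)) / (2 * a) := by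
  have hb : b < √(discrim a b c) :=
    Real.lt_sqrt_of_sq_lt (by rw [discrim]; nlinarith)
  exact div_pos (by linarith) (by positivity)

section kstar

variable {r δ lam h p ε cbar : ℝ}

theorem kstar_eq_quadratic_root (r δ lam h p ε cbar : ℝ) :
    kstar r δ lam h p ε cbar =
      (-(δ * ε + cbar * lam / (r + δ))
        + √(discrim δ (δ * ε + cbar * lam / (r + δ))
              (ε * (cbar * lam / (r + δ)) - lam * h * p / (r + δ)))) / (2 * δ) := by
  rw [kstar, discrim]
  ring_nf

theorem kstar_const_coeff_neg (hrδ : 0 < r + δ) (hlam : 0 < lam) (hc : cbar * ε < h * p) :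
    ε * (cbar * lam / (r + δ)) - lam * h * p / (r + δ) < 0 := by
  rw [← mul_div_assoc, ← sub_div]
  exact div_neg_of_neg_of_pos (by nlinarith) hrδ

theorem kstar_pos (hδ : 0 < δ) (hrδ : 0 < r + δ) (hlam : 0 < lam) (hc : cbar * ε < h * p) :
    0 < kstar r δ lam h p ε cbar := by
  rw [kstar_eq_quadratic_root]
  exact quadratic_larger_root_pos hδ (kstar_const_coeff_neg hrδ hlam hc)

theorem kstar_stationary (hδ : 0 < δ) (hrδ : 0 < r + δ) (hlam : 0 < lam)
    (hc : cbar * ε < h * p) :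
    lam * (h * p) =
      (kstar r δ lam h p ε cbar + ε) * (lam * cbar + δ * (r + δ) * kstar r δ lam h p ε cbar) := by
  have hroot := quadratic_larger_root_eq_zero hδ.ne'
    (discrim_pos_of_neg_const (b := δ * ε + cbar * lam / (r + δ)) hδ
      (kstar_const_coeff_neg hrδ hlam hc)).le
  simp only [← kstar_eq_quadratic_root] at hroot
  field_simp at hroot
  linear_combination -hroot

theorem price_at_kstar (hδ : 0 < δ) (hrδ : 0 < r + δ) (hlam : 0 < lam)
    (hc : cbar * ε < h * p) (hkε : kstar r δ lam h p ε cbar + ε ≠ 0) :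
    h * (p / (kstar r δ lam h p ε cbar + ε)) =
      cbar + δ * (r + δ) * kstar r δ lam h p ε cbar / lam := by
  have hstat := kstar_stationary hδ hrδ hlam hc
  field_simp
  linear_combination hstat

end kstar

theorem kstar_pos_and_price_gt_cost_general
    (r δ lam h p ε c α : ℝ)
    (hr : 0 < r) (hδ : 0 < δ) (hlam : 0 < lam) (hh : 0 < h) (hε : 0 < ε)
    (hα : 0 ≤ α) (hc : (h * c + (r + δ) * α) * ε < h * p) :
    0 < kstar r δ lam h p ε (h * c + (r + δ) * α) ∧
      c < p / (kstar r δ lam h p ε (h * c + (r + δ) * α) + ε) := by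
  have hrδ : 0 < r + δ := by linarith
  have hk := kstar_pos hδ hrδ hlam hc
  refine ⟨hk, ?_⟩
  have hprice := price_at_kstar hδ hrδ hlam hc (by linarith)
  have hmargin : 0 < δ * (r + δ) * kstar r δ lam h p ε (h * c + (r + δ) * α) / lam := by
    positivity
  have hinstall : 0 ≤ (r + δ) * α := by positivity
  refine lt_of_mul_lt_mul_left ?_ hh.le
  linarith

/-- Under `α ≥ 0` and `c̄ε < hp` (with `c̄ = hc + (r+δ)α`), the equilibrium capacity is
positive and the spot price at equilibrium exceeds the cost of production: `p/(k*+ε) > c`,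
so the positive part in the stationary relation is not active. -/
theorem kstar_pos_and_price_gt_cost
    (r δ lam h p ε c α : ℝ)
    (hr : 0 < r) (hδ : 0 < δ) (hlam : 0 < lam) (hh : 0 < h) (hp : 0 < p) (hε : 0 < ε)
    (hα : 0 ≤ α) (hc : (h * c + (r + δ) * α) * ε < h * p) :
    0 < kstar r δ lam h p ε (h * c + (r + δ) * α) ∧
      c < p / (kstar r δ lam h p ε (h * c + (r + δ) * α) + ε) :=
  kstar_pos_and_price_gt_cost_general r δ lam h p ε c α hr hδ hlam hh hε hα hc
end

section
/- Assume α ≥ 0, c ≥ 0 and c̄ε < hp. Then the cubic polynomial P(k) = δk³ + (2εδ + λc̄/(r+δ))k² + (δε² + 2ελc̄/(r+δ))k + (ελ/(r+δ))(c̄ε − hp) has exactly one root in (0,∞). -/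
/-!
Since `c̄ ≥ 0`, the coefficients of `k³`, `k²` and `k` are nonnegative (the last one positive) while
the constant term is negative because `c̄ε < hp`. Such a cubic is strictly increasing on `[0, ∞)`, and
it is negative at `0` and nonnegative at the zero of its affine part (linear term plus constant).
-/

open Set

section Cubic

variable {a b c d : ℝ}

theorem strictMonoOn_cubic (ha : 0 ≤ a) (hb : 0 ≤ b) (hc : 0 < c) :
    StrictMonoOn (fun x => a * x ^ 3 + b * x ^ 2 + c * x + d) (Ici 0) := by
  intro x hx y _ hxy
  have hx : 0 ≤ x := hx
  have h3 : a * x ^ 3 ≤ a * y ^ 3 := by gcongr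
  have h2 : b * x ^ 2 ≤ b * y ^ 2 := by gcongr
  have h1 : c * x < c * y := by gcongr
  dsimp only
  linarith

theorem exists_pos_root_cubic (ha : 0 ≤ a) (hb : 0 ≤ b) (hc : 0 < c) (hd : d < 0) :
    ∃ k, 0 < k ∧ a * k ^ 3 + b * k ^ 2 + c * k + d = 0 := by
  set M := -d / c
  have hM : 0 ≤ M := div_nonneg (by linarith) hc.le
  have hlin : c * M + d = 0 := by simp [M, mul_div_cancel₀, hc.ne']
  have hfM : 0 ≤ a * M ^ 3 + b * M ^ 2 + c * M + d := by
    have : 0 ≤ a * M ^ 3 + b * M ^ 2 := by positivity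
    linarith
  have hcont : Continuous fun x => a * x ^ 3 + b * x ^ 2 + c * x + d := by fun_prop
  obtain ⟨k, hk, hfk⟩ := intermediate_value_Icc hM hcont.continuousOn
    (show (0 : ℝ) ∈ Icc _ _ from ⟨by simpa using hd.le, hfM⟩)
  refine ⟨k, hk.1.lt_of_ne ?_, hfk⟩
  rintro rfl
  exact hd.ne (by simpa using hfk)

theorem existsUnique_pos_root_cubic (ha : 0 ≤ a) (hb : 0 ≤ b) (hc : 0 < c) (hd : d < 0) :
    ∃! k, 0 < k ∧ a * k ^ 3 + b * k ^ 2 + c * k + d = 0 := by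
  obtain ⟨k, hk, hfk⟩ := exists_pos_root_cubic ha hb hc hd
  refine ⟨k, ⟨hk, hfk⟩, fun y ⟨hy, hfy⟩ => ?_⟩
  exact (strictMonoOn_cubic (d := d) ha hb hc).injOn hy.le hk.le (hfy.trans hfk.symm)

end Cubic

theorem monopoly_cubic_unique_positive_root_general
    (r δ lam h p ε c α : ℝ)
    (hr : 0 < r) (hδ : 0 < δ) (hlam : 0 < lam) (hh : 0 < h) (hε : 0 < ε)
    (hα : 0 ≤ α) (hc : 0 ≤ c)
    (hce : (h * c + (r + δ) * α) * ε < h * p) :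
    ∃! k : ℝ, 0 < k ∧
      δ * k ^ 3
        + (2 * ε * δ + lam * (h * c + (r + δ) * α) / (r + δ)) * k ^ 2
        + (δ * ε ^ 2 + 2 * ε * lam * (h * c + (r + δ) * α) / (r + δ)) * k
        + (ε * lam / (r + δ)) * ((h * c + (r + δ) * α) * ε - h * p) = 0 := by
  apply existsUnique_pos_root_cubic hδ.le
  · positivity
  · positivity
  · exact mul_neg_of_pos_of_neg (by positivity) (by linarith)

/-- Under `α ≥ 0`, `c ≥ 0` and `c̄ε < hp` (with `c̄ = hc + (r+δ)α`), the cubic polynomial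
`P(k) = δk³ + (2εδ + λc̄/(r+δ))k² + (δε² + 2ελc̄/(r+δ))k + (ελ/(r+δ))(c̄ε - hp)`
has exactly one root in `(0,∞)` (the monopoly equilibrium capacity). -/
theorem monopoly_cubic_unique_positive_root
    (r δ lam h p ε c α : ℝ)
    (hr : 0 < r) (hδ : 0 < δ) (hlam : 0 < lam) (hh : 0 < h) (hp : 0 < p) (hε : 0 < ε)
    (hα : 0 ≤ α) (hc : 0 ≤ c)
    (hce : (h * c + (r + δ) * α) * ε < h * p) :
    ∃! k : ℝ, 0 < k ∧
      δ * k ^ 3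
        + (2 * ε * δ + lam * (h * c + (r + δ) * α) / (r + δ)) * k ^ 2
        + (δ * ε ^ 2 + 2 * ε * lam * (h * c + (r + δ) * α) / (r + δ)) * k
        + (ε * lam / (r + δ)) * ((h * c + (r + δ) * α) * ε - h * p) = 0 :=
  monopoly_cubic_unique_positive_root_general r δ lam h p ε c α hr hδ hlam hh hε hα hc hce
end

section
/- Suppose (k_a, u_a) ∈ ℝ² with k_a > 0 satisfies the competitive stationary system λ(u_a − α) = δk_a and (r+δ)u_a = h(p/(k_a+ε) − c)⁺, and (k_m, u_m) ∈ ℝ² with k_m > 0 satisfies the monopoly stationary system λ(u_m − α) = δk_m and (r+δ)u_m = hpε/(k_m+ε)² − hc. Then k_m < k_a: the monopoly equilibrium capacity is strictly smaller than the competitive equilibrium capacity. -/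
/-!
If `k_a ≤ k_m`, the installation equation `λ(u - α) = δk` forces `u_a ≤ u_m`. But the monopolist's
marginal revenue `pε/(k+ε)²` lies strictly below the price `p/(k+ε)`, and the price decreases in
capacity, so `(r+δ)u_m < h(p/(k_m+ε) - c) ≤ h(p/(k_a+ε) - c)⁺ = (r+δ)u_a`, a contradiction.
-/

lemma mul_div_sq_lt_div {p ε k : ℝ} (hp : 0 < p) (hε : 0 < ε) (hk : 0 < k) :
    p * ε / (k + ε) ^ 2 < p / (k + ε) := by
  have hkε : 0 < k + ε := by linarith
  rw [div_lt_div_iff₀ (by positivity) hkε]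
  nlinarith [mul_pos (mul_pos hp hk) hkε]

lemma monopoly_return_lt_competitive_return {h p ε c k k' : ℝ} (hh : 0 < h) (hp : 0 < p)
    (hε : 0 < ε) (hk : 0 < k) (hkk' : k ≤ k') :
    h * p * ε / (k' + ε) ^ 2 - h * c < h * max (p / (k + ε) - c) 0 := by
  have hk' : 0 < k' := hk.trans_le hkk'
  have price_antitone : p / (k' + ε) ≤ p / (k + ε) :=
    div_le_div_of_nonneg_left hp.le (by linarith) (by linarith)
  calc h * p * ε / (k' + ε) ^ 2 - h * c
      = h * (p * ε / (k' + ε) ^ 2 - c) := by ring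
    _ < h * (p / (k' + ε) - c) :=
      mul_lt_mul_of_pos_left (sub_lt_sub_right (mul_div_sq_lt_div hp hε hk') c) hh
    _ ≤ h * max (p / (k + ε) - c) 0 := by
      gcongr
      exact le_max_of_le_left (by linarith)

lemma le_of_installation_eq {lam δ α k k' u u' : ℝ} (hlam : 0 < lam) (hδ : 0 ≤ δ)
    (hu : lam * (u - α) = δ * k) (hu' : lam * (u' - α) = δ * k') (hkk' : k ≤ k') : u ≤ u' := by
  have : lam * (u - α) ≤ lam * (u' - α) := by
    rw [hu, hu']
    exact mul_le_mul_of_nonneg_left hkk' hδ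
  linarith [le_of_mul_le_mul_left this hlam]

theorem monopoly_lt_competitive_general
    (r δ lam h p ε c α : ℝ)
    (hr : 0 < r) (hδ : 0 < δ) (hlam : 0 < lam) (hh : 0 < h) (hp : 0 < p) (hε : 0 < ε)
    (ka ua km um : ℝ) (hka : 0 < ka)
    (ha1 : lam * (ua - α) = δ * ka)
    (ha2 : (r + δ) * ua = h * max (p / (ka + ε) - c) 0)
    (hm1 : lam * (um - α) = δ * km)
    (hm2 : (r + δ) * um = h * p * ε / (km + ε) ^ 2 - h * c) :
    km < ka := by
  by_contra! hle
  have hu : ua ≤ um := le_of_installation_eq hlam hδ.le ha1 hm1 hle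
  have hret : (r + δ) * um < (r + δ) * ua := by
    rw [hm2, ha2]
    exact monopoly_return_lt_competitive_return hh hp hε hka hle
  exact (lt_of_mul_lt_mul_left hret (by positivity)).not_ge hu

/-- Comparison of regimes: the monopoly equilibrium capacity is strictly smaller than the
competitive equilibrium capacity. -/
theorem monopoly_lt_competitive
    (r δ lam h p ε c α : ℝ)
    (hr : 0 < r) (hδ : 0 < δ) (hlam : 0 < lam) (hh : 0 < h) (hp : 0 < p) (hε : 0 < ε)
    (ka ua km um : ℝ) (hka : 0 < ka) (hkm : 0 < km)
    (ha1 : lam * (ua - α) = δ * ka)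
    (ha2 : (r + δ) * ua = h * max (p / (ka + ε) - c) 0)
    (hm1 : lam * (um - α) = δ * km)
    (hm2 : (r + δ) * um = h * p * ε / (km + ε) ^ 2 - h * c) :
    km < ka :=
  monopoly_lt_competitive_general r δ lam h p ε c α hr hδ hlam hh hp hε ka ua km um hka ha1 ha2 hm1
    hm2
end

section
/- Let φ, ψ : [0,∞) → ℝ be continuous and suppose the function g(k) = p/(k+ε) − φ(k) + ψ(k) is nonincreasing on [0,∞). If moreover α(r+δ) ≤ h(g(0))⁺, then there exists exactly one k* ≥ 0 satisfying the equilibrium equation (δk*/λ + α)(r+δ) = h(g(k*))⁺. -/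
/-- With a capacity-dependent cost of production `φ` and subsidy `ψ`, if
`g(k) = p/(k+ε) - φ(k) + ψ(k)` is nonincreasing on `[0,∞)` and `α(r+δ) ≤ h(g(0))⁺`, then
there is exactly one `k* ≥ 0` solving the equilibrium equation
`(δk*/λ + α)(r+δ) = h(g(k*))⁺`. -/
theorem unique_equilibrium_nonconstant_costs
    (r δ lam h p ε α : ℝ)
    (hr : 0 < r) (hδ : 0 < δ) (hlam : 0 < lam) (hh : 0 < h) (hp : 0 < p) (hε : 0 < ε)
    (hα : 0 ≤ α)
    (φ ψ : ℝ → ℝ)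
    (hφ : ContinuousOn φ (Set.Ici 0)) (hψ : ContinuousOn ψ (Set.Ici 0))
    (hg : AntitoneOn (fun k => p / (k + ε) - φ k + ψ k) (Set.Ici 0))
    (h0 : α * (r + δ) ≤ h * max (p / (0 + ε) - φ 0 + ψ 0) 0) :
    ∃! k : ℝ, 0 ≤ k ∧
      (δ * k / lam + α) * (r + δ) = h * max (p / (k + ε) - φ k + ψ k) 0 := by
  set g : ℝ → ℝ := fun k => p / (k + ε) - φ k + ψ k with hgdef
  have hgc : ContinuousOn g (Set.Ici 0) := by
    apply ContinuousOn.add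
    · apply ContinuousOn.sub
      · apply ContinuousOn.div continuousOn_const (by fun_prop)
        intro x hx
        have hx0 : (0:ℝ) ≤ x := hx
        nlinarith
      · exact hφ
    · exact hψ
  set M := max (g 0) 0 with hM
  have hM0 : 0 ≤ M := le_max_right _ _
  -- antitone RHS
  have hRanti : ∀ a ∈ Set.Ici (0:ℝ), ∀ b ∈ Set.Ici (0:ℝ), a ≤ b →
      h * max (g b) 0 ≤ h * max (g a) 0 := by
    intro a ha b hb hab
    exact mul_le_mul_of_nonneg_left (max_le_max (hg ha hb hab) le_rfl) hh.le
  set K := lam * (h * M) / (δ * (r + δ)) with hK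
  have hK0 : 0 ≤ K := by
    apply div_nonneg
    · positivity
    · positivity
  set F : ℝ → ℝ := fun k => (δ * k / lam + α) * (r + δ) - h * max (g k) 0 with hF
  have hFc : ContinuousOn F (Set.Icc 0 K) := by
    apply ContinuousOn.sub
    · fun_prop
    · exact continuousOn_const.mul ((hgc.mono Set.Icc_subset_Ici_self).sup continuousOn_const)
  have hF0 : F 0 ≤ 0 := by
    simp only [hF]
    have : δ * 0 / lam + α = α := by field_simp; ring
    rw [this]
    linarith [h0]
  have hδK : δ * K / lam = h * M / (r + δ) := by
    rw [hK]; field_simp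
  have hFK : 0 ≤ F K := by
    have h1 : h * max (g K) 0 ≤ h * M := hRanti 0 (Set.mem_Ici.2 le_rfl) K hK0 hK0
    have h2 : (δ * K / lam + α) * (r + δ) = h * M + α * (r + δ) := by
      rw [hδK]; field_simp
    simp only [hF]
    rw [h2]
    nlinarith
  obtain ⟨k, hkmem, hFk⟩ := intermediate_value_Icc hK0 hFc ⟨hF0, hFK⟩
  have hk0 : 0 ≤ k := hkmem.1
  have hkeq : (δ * k / lam + α) * (r + δ) = h * max (g k) 0 := by
    have : F k = 0 := hFk
    simp only [hF] at this
    linarith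
  refine ⟨k, ⟨hk0, hkeq⟩, ?_⟩
  rintro y ⟨hy0, hyeq⟩
  by_contra hne
  rcases lt_or_gt_of_ne hne with hlt | hlt
  · have hL : (δ * y / lam + α) * (r + δ) < (δ * k / lam + α) * (r + δ) := by
      have : δ * y / lam < δ * k / lam := by gcongr
      nlinarith
    have hR : h * max (g k) 0 ≤ h * max (g y) 0 := hRanti y hy0 k hk0 hlt.le
    rw [hyeq, hkeq] at hL
    exact absurd (hL.trans_le hR) (lt_irrefl _)
  · have hL : (δ * k / lam + α) * (r + δ) < (δ * y / lam + α) * (r + δ) := by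
      have : δ * k / lam < δ * y / lam := by gcongr
      nlinarith
    have hR : h * max (g y) 0 ≤ h * max (g k) 0 := hRanti k hk0 y hy0 hlt.le
    rw [hyeq, hkeq] at hL
    exact absurd (hL.trans_le hR) (lt_irrefl _)
end

section
/- Define F(k,u) = −λ(u−α) + δk and G(k,u) = −δu + h(p/(k+ε) − c)⁺. Then for all u, ũ ∈ ℝ and all k, k̃ ≥ 0: (F(k,u) − F(k̃,ũ))·(u − ũ) + (G(k,u) − G(k̃,ũ))·(k − k̃) ≤ −λ(u − ũ)². -/
/-! The transport terms `δ k (u - ũ)` of `F` and `-δ u (k - k̃)` of `G` cancel, leaving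
`-λ (u - ũ)²` plus `h (g k - g k̃)(k - k̃)` with `g k = (p/(k+ε) - c)⁺`; the latter is
nonpositive because `g` is antitone on `k > -ε`. -/

theorem antitoneOn_max_div_add_sub_zero {p : ℝ} (hp : 0 ≤ p) (ε c : ℝ) :
    AntitoneOn (fun k => max (p / (k + ε) - c) 0) (Set.Ioi (-ε)) := by
  intro a ha b _ hab
  have hpos : 0 < a + ε := by linarith [Set.mem_Ioi.mp ha]
  have hdiv : p / (b + ε) ≤ p / (a + ε) := div_le_div_of_nonneg_left hp hpos (by linarith)
  exact max_le_max (by linarith) le_rfl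

theorem FG_monotone_general
    (δ lam h p ε c α : ℝ)
    (hh : 0 < h) (hp : 0 < p) (hε : 0 < ε)
    (u ut k kt : ℝ) (hk : 0 ≤ k) (hkt : 0 ≤ kt) :
    ((-lam * (u - α) + δ * k) - (-lam * (ut - α) + δ * kt)) * (u - ut)
      + ((-δ * u + h * max (p / (k + ε) - c) 0)
          - (-δ * ut + h * max (p / (kt + ε) - c) 0)) * (k - kt)
      ≤ -lam * (u - ut) ^ 2 := by
  have hmem : ∀ x : ℝ, 0 ≤ x → x ∈ Set.Ioi (-ε) := fun x hx => by
    rw [Set.mem_Ioi]; linarith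
  have hG : (max (p / (k + ε) - c) 0 - max (p / (kt + ε) - c) 0) * (k - kt) ≤ 0 :=
    (antivaryOn_id_iff.mpr (antitoneOn_max_div_add_sub_zero hp.le ε c)).sub_mul_sub_nonpos
      (hmem kt hkt) (hmem k hk)
  calc _ = -lam * (u - ut) ^ 2
          + h * ((max (p / (k + ε) - c) 0 - max (p / (kt + ε) - c) 0) * (k - kt)) := by ring
    _ ≤ -lam * (u - ut) ^ 2 := by linarith [mul_nonpos_of_nonneg_of_nonpos hh.le hG]

/-- Monotonicity of the pair `(F, G)` with `F(k,u) = -λ(u-α) + δk` and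
`G(k,u) = -δu + h(p/(k+ε) - c)⁺`: for all `u, ũ ∈ ℝ` and `k, k̃ ≥ 0`,
`(F(k,u) - F(k̃,ũ))(u - ũ) + (G(k,u) - G(k̃,ũ))(k - k̃) ≤ -λ(u - ũ)²`. -/
theorem FG_monotone
    (δ lam h p ε c α : ℝ)
    (hδ : 0 < δ) (hlam : 0 < lam) (hh : 0 < h) (hp : 0 < p) (hε : 0 < ε)
    (u ut k kt : ℝ) (hk : 0 ≤ k) (hkt : 0 ≤ kt) :
    ((-lam * (u - α) + δ * k) - (-lam * (ut - α) + δ * kt)) * (u - ut)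
      + ((-δ * u + h * max (p / (k + ε) - c) 0)
          - (-δ * ut + h * max (p / (kt + ε) - c) 0)) * (k - kt)
      ≤ -lam * (u - ut) ^ 2 :=
  FG_monotone_general δ lam h p ε c α hh hp hε u ut k kt hk hkt
end

section
/- Let K : [0,∞) → ℝ be continuously differentiable and bounded with bounded derivative, with K(0) = k₀, and let α_sub, c_sub ∈ ℝ, setting c̄_sub = h·c_sub + (r+δ)·α_sub. Then α_sub·∫₀^∞ e^{−rt}(K̇ₜ + δKₜ)dt + h·c_sub·∫₀^∞ e^{−rt}(Kₜ − k₀e^{−δt})dt = c̄_sub·∫₀^∞ e^{−rt}Kₜ dt − k₀·c̄_sub/(r+δ). -/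
open MeasureTheory

private lemma exp_tendsto_zero (r : ℝ) (hr : 0 < r) :
    Filter.Tendsto (fun t : ℝ => Real.exp (-r * t)) Filter.atTop (nhds 0) := by
  have h1 : Filter.Tendsto (fun t : ℝ => r * t) Filter.atTop Filter.atTop :=
    Filter.Tendsto.const_mul_atTop hr Filter.tendsto_id
  have h2 : Filter.Tendsto (fun t : ℝ => -r * t) Filter.atTop Filter.atBot := by
    have := Filter.tendsto_neg_atTop_atBot.comp h1
    simpa [Function.comp_def, neg_mul] using this
  have := Real.tendsto_exp_atBot.comp h2
  simpa [Function.comp_def] using this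

private lemma exp_mul_tendsto {r M : ℝ} (hr : 0 < r) {f : ℝ → ℝ}
    (hf : ∀ t, |f t| ≤ M) :
    Filter.Tendsto (fun t => Real.exp (-r * t) * f t) Filter.atTop (nhds 0) := by
  have hg : Filter.Tendsto (fun t : ℝ => M * Real.exp (-r * t)) Filter.atTop (nhds 0) := by
    simpa using (exp_tendsto_zero r hr).const_mul M
  refine squeeze_zero_norm (fun t => ?_) hg
  rw [norm_mul, Real.norm_eq_abs, Real.norm_eq_abs, abs_of_pos (Real.exp_pos _)]
  calc Real.exp (-r * t) * |f t| ≤ Real.exp (-r * t) * M :=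
        mul_le_mul_of_nonneg_left (hf t) (Real.exp_pos _).le
    _ = M * Real.exp (-r * t) := mul_comm _ _

private lemma integrable_exp_mul {r M : ℝ} (hr : 0 < r) {f : ℝ → ℝ}
    (hcont : Continuous f) (hf : ∀ t, |f t| ≤ M) :
    IntegrableOn (fun t => Real.exp (-r * t) * f t) (Set.Ioi (0 : ℝ)) := by
  have hg : IntegrableOn (fun t : ℝ => M * Real.exp (-r * t)) (Set.Ioi (0 : ℝ)) :=
    (exp_neg_integrableOn_Ioi 0 hr).const_mul M
  refine hg.mono' ?_ ?_
  · exact (((Real.continuous_exp.comp (continuous_const.mul continuous_id)).mul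
      hcont)).aestronglyMeasurable
  · filter_upwards with t
    rw [norm_mul, Real.norm_eq_abs, Real.norm_eq_abs, abs_of_pos (Real.exp_pos _)]
    calc Real.exp (-r * t) * |f t| ≤ Real.exp (-r * t) * M :=
          mul_le_mul_of_nonneg_left (hf t) (Real.exp_pos _).le
      _ = M * Real.exp (-r * t) := mul_comm _ _

/-- ∫₀^∞ e^{-bt} dt = 1/b -/
private lemma integral_exp_neg (b : ℝ) (hb : 0 < b) :
    (∫ t in Set.Ioi (0 : ℝ), Real.exp (-b * t)) = 1 / b := by
  have hderiv : ∀ x ∈ Set.Ici (0 : ℝ),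
      HasDerivAt (fun t : ℝ => -Real.exp (-b * t) / b) (Real.exp (-b * x)) x := by
    intro x _
    have h1 : HasDerivAt (fun t : ℝ => -b * t) (-b) x := by
      simpa using (hasDerivAt_id x).const_mul (-b)
    have h2 := (Real.hasDerivAt_exp (-b * x)).comp x h1
    have h3 := (h2.neg).div_const b
    refine h3.congr_deriv ?_
    field_simp [hb.ne']
  have hint : IntegrableOn (fun t : ℝ => Real.exp (-b * t)) (Set.Ioi (0 : ℝ)) :=
    exp_neg_integrableOn_Ioi 0 hb
  have htend : Filter.Tendsto (fun t : ℝ => -Real.exp (-b * t) / b)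
      Filter.atTop (nhds 0) := by
    have := ((exp_tendsto_zero b hb).neg).div_const b
    simpa using this
  rw [integral_Ioi_of_hasDerivAt_of_tendsto' hderiv hint htend]
  norm_num
  ring

/-- The total discounted subsidy cost depends only on the aggregated subsidy
`c̄_sub = h·c_sub + (r+δ)·α_sub`:
`α_sub ∫₀^∞ e^{-rt}(K̇ₜ + δKₜ)dt + h c_sub ∫₀^∞ e^{-rt}(Kₜ - k₀e^{-δt})dt
  = c̄_sub ∫₀^∞ e^{-rt}Kₜ dt - k₀ c̄_sub/(r+δ)`. -/
theorem subsidy_cost_identity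
    (r δ h : ℝ) (hr : 0 < r) (hδ : 0 < δ) (hh : 0 < h)
    (K : ℝ → ℝ) (hK : ContDiff ℝ 1 K)
    (hKbd : ∃ M : ℝ, ∀ t : ℝ, |K t| ≤ M)
    (hK'bd : ∃ M : ℝ, ∀ t : ℝ, |deriv K t| ≤ M)
    (k₀ : ℝ) (hK0 : K 0 = k₀)
    (αsub csub : ℝ) :
    αsub * (∫ t in Set.Ioi (0 : ℝ), Real.exp (-r * t) * (deriv K t + δ * K t))
      + h * csub * (∫ t in Set.Ioi (0 : ℝ), Real.exp (-r * t) * (K t - k₀ * Real.exp (-δ * t)))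
    = (h * csub + (r + δ) * αsub) * (∫ t in Set.Ioi (0 : ℝ), Real.exp (-r * t) * K t)
      - k₀ * (h * csub + (r + δ) * αsub) / (r + δ) := by
  obtain ⟨M, hM⟩ := hKbd
  obtain ⟨M', hM'⟩ := hK'bd
  have hKcont : Continuous K := hK.continuous
  have hK'cont : Continuous (deriv K) := (hK.iterate_deriv' 0 1).continuous
  -- integrability
  have intK : IntegrableOn (fun t => Real.exp (-r * t) * K t) (Set.Ioi (0 : ℝ)) :=
    integrable_exp_mul hr hKcont hM
  have intK' : IntegrableOn (fun t => Real.exp (-r * t) * deriv K t) (Set.Ioi (0 : ℝ)) :=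
    integrable_exp_mul hr hK'cont hM'
  have intE : IntegrableOn (fun t : ℝ => Real.exp (-r * t) * (k₀ * Real.exp (-δ * t)))
      (Set.Ioi (0 : ℝ)) := by
    have : IntegrableOn (fun t : ℝ => k₀ * Real.exp (-(r + δ) * t)) (Set.Ioi (0 : ℝ)) :=
      (exp_neg_integrableOn_Ioi 0 (by linarith)).const_mul k₀
    refine this.congr_fun ?_ measurableSet_Ioi
    intro t _
    simp only
    rw [show (-(r + δ) * t) = (-r * t) + (-δ * t) by ring, Real.exp_add]
    ring
  -- integration by parts: ∫ e^{-rt} K' = r ∫ e^{-rt} K - K 0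
  have ibp : (∫ t in Set.Ioi (0 : ℝ), Real.exp (-r * t) * deriv K t)
      = r * (∫ t in Set.Ioi (0 : ℝ), Real.exp (-r * t) * K t) - K 0 := by
    have hderiv : ∀ x ∈ Set.Ici (0 : ℝ),
        HasDerivAt (fun t : ℝ => Real.exp (-r * t) * K t)
          (Real.exp (-r * x) * deriv K x - r * (Real.exp (-r * x) * K x)) x := by
      intro x _
      have h1 : HasDerivAt (fun t : ℝ => Real.exp (-r * t)) (-r * Real.exp (-r * x)) x := by
        have h0 : HasDerivAt (fun t : ℝ => -r * t) (-r) x := by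
          simpa using (hasDerivAt_id x).const_mul (-r)
        have := (Real.hasDerivAt_exp (-r * x)).comp x h0
        simpa [Function.comp_def, mul_comm] using this
      have h2 : HasDerivAt K (deriv K x) x :=
        (hK.differentiable one_ne_zero x).hasDerivAt
      have := h1.mul h2
      refine this.congr_deriv ?_
      ring
    have hint : IntegrableOn
        (fun x : ℝ => Real.exp (-r * x) * deriv K x - r * (Real.exp (-r * x) * K x))
        (Set.Ioi (0 : ℝ)) := intK'.sub (intK.const_mul r)
    have htend : Filter.Tendsto (fun t : ℝ => Real.exp (-r * t) * K t)
        Filter.atTop (nhds 0) := exp_mul_tendsto hr hM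
    have heq := integral_Ioi_of_hasDerivAt_of_tendsto' hderiv hint htend
    rw [integral_sub intK' (intK.const_mul r), integral_const_mul] at heq
    simp only [mul_zero, neg_zero, Real.exp_zero, one_mul, zero_sub] at heq
    linarith [heq]
  -- ∫ e^{-rt} k₀ e^{-δt} = k₀/(r+δ)
  have intEval : (∫ t in Set.Ioi (0 : ℝ), Real.exp (-r * t) * (k₀ * Real.exp (-δ * t)))
      = k₀ / (r + δ) := by
    have h1 : (∫ t in Set.Ioi (0 : ℝ), Real.exp (-r * t) * (k₀ * Real.exp (-δ * t)))
        = k₀ * ∫ t in Set.Ioi (0 : ℝ), Real.exp (-(r + δ) * t) := by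
      rw [← integral_const_mul]
      refine setIntegral_congr_fun measurableSet_Ioi (fun t _ => ?_)
      rw [show (-(r + δ) * t) = (-r * t) + (-δ * t) by ring, Real.exp_add]
      ring
    rw [h1, integral_exp_neg (r + δ) (by linarith)]
    field_simp
  -- split the two integrals
  have split1 : (∫ t in Set.Ioi (0 : ℝ), Real.exp (-r * t) * (deriv K t + δ * K t))
      = (∫ t in Set.Ioi (0 : ℝ), Real.exp (-r * t) * deriv K t)
        + δ * (∫ t in Set.Ioi (0 : ℝ), Real.exp (-r * t) * K t) := by
    rw [← integral_const_mul, ← integral_add intK' (intK.const_mul δ)]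
    refine setIntegral_congr_fun measurableSet_Ioi (fun t _ => ?_)
    ring
  have split2 : (∫ t in Set.Ioi (0 : ℝ), Real.exp (-r * t) * (K t - k₀ * Real.exp (-δ * t)))
      = (∫ t in Set.Ioi (0 : ℝ), Real.exp (-r * t) * K t)
        - (∫ t in Set.Ioi (0 : ℝ), Real.exp (-r * t) * (k₀ * Real.exp (-δ * t))) := by
    rw [← integral_sub intK intE]
    refine setIntegral_congr_fun measurableSet_Ioi (fun t _ => ?_)
    ring
  rw [split1, split2, ibp, intEval, hK0]
  have hrδ : r + δ ≠ 0 := by linarith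
  field_simp
  ring
end

section
/- Let a, b > 0 with a ≠ b and γ ∈ ℝ, and set f(k,y) = −ak − by + γ. Suppose (k, y, ū) ∈ ℝ³ satisfies the stationary system λū = δk, f(k,y) = 0, and (r+δ)ū = hp/(k+y+ε) − c̄, with k + y + ε ≠ 0. Then k solves the quadratic equation δk² + ( δ·(γ/b + ε)/(1 − a/b) + c̄λ/(r+δ) )·k + (λ/((r+δ)(1 − a/b)))·( c̄(γ/b + ε) − hp ) = 0. -/
/-!
Along the reserve nullcline `f = 0` the total stock is affine in capacity,
`k + y + ε = (1 - a/b) k + (γ/b + ε)`. Eliminating `ū` between the installation and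
price equations and clearing the denominator `k + y + ε` gives a relation that is quadratic
in `k` once the total stock is replaced by that affine expression; dividing by
`(r + δ)(1 - a/b)` normalizes the leading coefficient to `δ`.
-/

lemma add_add_eq_of_linear_drift_eq_zero {a b γ k y ε : ℝ} (hb : b ≠ 0)
    (hf : -a * k - b * y + γ = 0) :
    k + y + ε = (1 - a / b) * k + (γ / b + ε) := by
  field_simp
  linear_combination -hf

lemma capacity_stock_relation_of_stationary {lam δ ρ H c k u S : ℝ} (hS : S ≠ 0)
    (hinst : lam * u = δ * k) (hprice : ρ * u = H / S - c) :
    δ * k * ρ * S + c * lam * S - lam * H = 0 := by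
  have hcleared : ρ * u * S = H - c * S := by
    rw [hprice, sub_mul, div_mul_cancel₀ H hS]
  linear_combination lam * hcleared - ρ * S * hinst

lemma normalized_quadratic_of_stationary_relation {lam δ ρ H c k B C : ℝ}
    (hρ : ρ ≠ 0) (hB : B ≠ 0)
    (hrel : δ * k * ρ * (B * k + C) + c * lam * (B * k + C) - lam * H = 0) :
    δ * k ^ 2 + (δ * C / B + c * lam / ρ) * k + (lam / (ρ * B)) * (c * C - H) = 0 := by
  have hscaled : (δ * k ^ 2 + (δ * C / B + c * lam / ρ) * k + (lam / (ρ * B)) * (c * C - H))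
      * (ρ * B) = δ * k * ρ * (B * k + C) + c * lam * (B * k + C) - lam * H := by
    field_simp
    ring
  exact (mul_eq_zero.mp (hscaled.trans hrel)).resolve_right (mul_ne_zero hρ hB)

theorem stationary_state_linear_reserve_quadratic_general
    (r δ lam h p ε cbar : ℝ)
    (hr : 0 < r) (hδ : 0 < δ)
    (a b γ : ℝ) (hb : 0 < b) (hab : a ≠ b)
    (k y ubar : ℝ)
    (h1 : lam * ubar = δ * k)
    (h2 : -a * k - b * y + γ = 0)
    (h3 : (r + δ) * ubar = h * p / (k + y + ε) - cbar)
    (hne : k + y + ε ≠ 0) :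
    δ * k ^ 2
      + (δ * (γ / b + ε) / (1 - a / b) + cbar * lam / (r + δ)) * k
      + (lam / ((r + δ) * (1 - a / b))) * (cbar * (γ / b + ε) - h * p) = 0 := by
  have hB : 1 - a / b ≠ 0 :=
    sub_ne_zero.mpr fun h => hab ((div_eq_one_iff_eq hb.ne').mp h.symm)
  have hrel := capacity_stock_relation_of_stationary hne h1 h3
  rw [add_add_eq_of_linear_drift_eq_zero hb.ne' h2] at hrel
  exact normalized_quadratic_of_stationary_relation (by positivity) hB hrel

/-- With a linear reserve drift `f(k,y) = -ak - by + γ` (`a ≠ b`), any stationary state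
`(k, y, ū)` of the model with adapting reserve satisfies the quadratic equation
`δk² + (δ(γ/b + ε)/(1 - a/b) + c̄λ/(r+δ))k + (λ/((r+δ)(1 - a/b)))(c̄(γ/b + ε) - hp) = 0`. -/
theorem stationary_state_linear_reserve_quadratic
    (r δ lam h p ε cbar : ℝ)
    (hr : 0 < r) (hδ : 0 < δ) (hlam : 0 < lam) (hh : 0 < h) (hp : 0 < p) (hε : 0 < ε)
    (a b γ : ℝ) (ha : 0 < a) (hb : 0 < b) (hab : a ≠ b)
    (k y ubar : ℝ)
    (h1 : lam * ubar = δ * k)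
    (h2 : -a * k - b * y + γ = 0)
    (h3 : (r + δ) * ubar = h * p / (k + y + ε) - cbar)
    (hne : k + y + ε ≠ 0) :
    δ * k ^ 2
      + (δ * (γ / b + ε) / (1 - a / b) + cbar * lam / (r + δ)) * k
      + (lam / ((r + δ) * (1 - a / b))) * (cbar * (γ / b + ε) - h * p) = 0 :=
  stationary_state_linear_reserve_quadratic_general r δ lam h p ε cbar hr hδ a b γ hb hab k y ubar
    h1 h2 h3 hne
end

section
/- Let φ : [0,∞) → [0,∞) be such that k ↦ k + φ(k) is nondecreasing. Suppose (k_a, u_a) ∈ ℝ² with k_a > 0 satisfies λ(u_a − α) = δk_a and (r+δ)u_a = h(p/(k_a + φ(k_a) + ε) − c)⁺, and (k_m, u_m) ∈ ℝ² with k_m > 0 satisfies λ(u_m − α) = δk_m and (r+δ)u_m = hp(φ(k_m) + ε)/(k_m + φ(k_m) + ε)² − hc. Then k_m < k_a: in the model with adapting reserve, the monopoly equilibrium capacity is strictly smaller than the competitive equilibrium capacity. -/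
/-- In the model with adapting reserve `y* = φ(k*)` (where `φ ≥ 0` on `[0,∞)` and
`k ↦ k + φ(k)` is nondecreasing), the monopoly equilibrium capacity is strictly smaller
than the competitive equilibrium capacity. -/
theorem monopoly_lt_competitive_with_reserve
    (r δ lam h p ε c α : ℝ)
    (hr : 0 < r) (hδ : 0 < δ) (hlam : 0 < lam) (hh : 0 < h) (hp : 0 < p) (hε : 0 < ε)
    (φ : ℝ → ℝ) (hφ : ∀ k : ℝ, 0 ≤ k → 0 ≤ φ k)
    (hφmono : MonotoneOn (fun k => k + φ k) (Set.Ici 0))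
    (ka ua km um : ℝ) (hka : 0 < ka) (hkm : 0 < km)
    (ha1 : lam * (ua - α) = δ * ka)
    (ha2 : (r + δ) * ua = h * max (p / (ka + φ ka + ε) - c) 0)
    (hm1 : lam * (um - α) = δ * km)
    (hm2 : (r + δ) * um = h * p * (φ km + ε) / (km + φ km + ε) ^ 2 - h * c) :
    km < ka := by
  by_contra hcon
  push_neg at hcon
  -- hcon : ka ≤ km
  set Sa := ka + φ ka + ε with hSa
  set Sm := km + φ km + ε with hSm
  have hφa := hφ ka hka.le
  have hφm := hφ km hkm.le
  have hSa0 : 0 < Sa := by positivity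
  have hSm0 : 0 < Sm := by positivity
  have hSle : Sa ≤ Sm := by
    have := hφmono (Set.mem_Ici.mpr hka.le) (Set.mem_Ici.mpr hkm.le) hcon
    simp only at this
    simpa [hSa, hSm] using add_le_add_right this ε
  -- step 1: (r+δ)um < h*(p/Sm - c)
  have h1 : (r + δ) * um < h * (p / Sm - c) := by
    rw [hm2]
    have hnum : p * (φ km + ε) < p * Sm := by
      apply mul_lt_mul_of_pos_left _ hp
      simp only [hSm]; linarith
    have : h * p * (φ km + ε) / Sm ^ 2 < h * (p / Sm) := by
      rw [div_lt_iff₀ (by positivity)]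
      have : h * (p * (φ km + ε)) < h * (p * Sm) := by
        exact mul_lt_mul_of_pos_left hnum hh
      calc h * p * (φ km + ε) = h * (p * (φ km + ε)) := by ring
        _ < h * (p * Sm) := this
        _ = h * (p / Sm) * Sm ^ 2 := by field_simp
    linarith [this]
  -- step 2: h*(p/Sm - c) ≤ (r+δ)ua
  have h2 : h * (p / Sm - c) ≤ (r + δ) * ua := by
    rw [ha2]
    have hdiv : p / Sm ≤ p / Sa := div_le_div_of_nonneg_left hp.le hSa0 hSle
    have : p / Sm - c ≤ max (p / Sa - c) 0 :=
      le_trans (by linarith) (le_max_left _ _)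
    exact mul_le_mul_of_nonneg_left this hh.le
  have hum : um < ua := by
    have hrd : 0 < r + δ := by linarith
    have := lt_of_lt_of_le h1 h2
    exact lt_of_mul_lt_mul_left (by linarith [mul_comm (r+δ) um]) hrd.le
  have : δ * km < δ * ka := by
    rw [← ha1, ← hm1]
    have := mul_lt_mul_of_pos_left (sub_lt_sub_right hum α) hlam
    linarith
  have := lt_of_mul_lt_mul_left this hδ.le
  linarith
end
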